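/- Let V be a finite vertex type with decidable equality and let G be a simple graph on V with decidable adjacency in which every vertex has positive degree and which has no bipartite connected component, and let M be its symmetrically normalized adjacency matrix. Then for every d : ℕ and every feature matrix X : Matrix V (Fin d) ℝ there exists Y : Matrix V (Fin d) ℝ such that M^k * X converges entrywise to Y as k → ∞ and M * Y = Y, i.e. every column of the limit lies in the eigenspace of M for eigenvalue 1. -/

import Mathlib

/-!
The normalized adjacency matrix `M` is symmetric, so `M ^ k = U diag(λᵢ ^ k) U*`, and this converges
when every eigenvalue lies in `(-1, 1]`; the limit `P` satisfies `M * P = P` because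
`M * M ^ k = M ^ (k + 1)`.

For an eigenvector `M x = μ x` put `y = D^{-1/2} x`. Then for every `s`,
`∑ᵥ ∑_{u ~ v} (y v + s y u)² = (1 + s² + 2 s μ) ‖x‖²`, and `s = ±1` gives `-1 ≤ μ ≤ 1`.
If `μ = -1`, this sum vanishes for `s = 1`, so `y` changes sign along every edge and the sign of `y`
2-colours the component of any vertex where `y ≠ 0`.
-/

open Matrix Filter
open Topology Finset

/-- The symmetrically normalized adjacency matrix `D^{-1/2} * A * D^{-1/2}` of a graph. -/
noncomputable def normAdj {V : Type} [Fintype V] [DecidableEq V]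
    (G : SimpleGraph V) [DecidableRel G.Adj] : Matrix V V ℝ :=
  Matrix.diagonal (fun v => (G.degree v : ℝ) ^ (-(1/2 : ℝ))) * G.adjMatrix ℝ *
    Matrix.diagonal (fun v => (G.degree v : ℝ) ^ (-(1/2 : ℝ)))

/-- `G` has no bipartite connected component: for every connected component, the
subgraph induced on its vertex set is not 2-colorable. -/
def NoBipartiteComponent {V : Type} (G : SimpleGraph V) : Prop :=
  ∀ c : G.ConnectedComponent, ¬ (G.induce c.supp).Colorable 2

theorem mul_eq_of_tendsto_pow {M : Type*} [Monoid M] [TopologicalSpace M] [ContinuousMul M]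
    [T2Space M] {a p : M} (h : Tendsto (a ^ ·) atTop (𝓝 p)) : a * p = p := by
  refine tendsto_nhds_unique ?_ (h.comp (tendsto_add_atTop_nat 1))
  simpa only [Function.comp_def, pow_succ'] using h.const_mul a

theorem Real.exists_tendsto_pow_of_mem_Ioc {t : ℝ} (ht : t ∈ Set.Ioc (-1) 1) :
    ∃ l, Tendsto (t ^ ·) atTop (𝓝 l) := by
  rcases ht.2.eq_or_lt with rfl | ht1
  · exact ⟨1, by simp⟩
  · exact ⟨0, tendsto_pow_atTop_nhds_zero_of_abs_lt_one (abs_lt.2 ⟨ht.1, ht1⟩)⟩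

theorem Matrix.IsHermitian.exists_tendsto_pow {𝕜 n : Type*} [RCLike 𝕜] [Fintype n] [DecidableEq n]
    {A : Matrix n n 𝕜} (hA : A.IsHermitian)
    (h : ∀ (μ : ℝ) (x : n → 𝕜), x ≠ 0 → A *ᵥ x = μ • x → μ ∈ Set.Ioc (-1) 1) :
    ∃ P, Tendsto (A ^ ·) atTop (𝓝 P) := by
  have hev (i : n) : hA.eigenvalues i ∈ Set.Ioc (-1) 1 :=
    h _ _ ((WithLp.ofLp_eq_zero 2).ne.2 <| hA.eigenvectorBasis.orthonormal.ne_zero i)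
      (hA.mulVec_eigenvectorBasis i)
  choose l hl using fun i => Real.exists_tendsto_pow_of_mem_Ioc (hev i)
  set U := hA.eigenvectorUnitary
  refine ⟨Unitary.conjStarAlgAut 𝕜 _ U (diagonal (RCLike.ofReal ∘ l)), ?_⟩
  have hcont : Continuous (Unitary.conjStarAlgAut 𝕜 _ U) := by
    rw [funext (Unitary.conjStarAlgAut_apply U)]
    fun_prop
  have hdiag : Tendsto (fun k => diagonal (RCLike.ofReal ∘ hA.eigenvalues) ^ k) atTop
      (𝓝 (diagonal (RCLike.ofReal ∘ l : n → 𝕜))) := by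
    simp only [diagonal_pow]
    refine (continuous_id.matrix_diagonal.tendsto _).comp (tendsto_pi_nhds.2 fun i => ?_)
    simpa only [Pi.pow_apply, Function.comp_def, RCLike.ofReal_pow] using
      (RCLike.continuous_ofReal.tendsto _).comp (hl i)
  rw [hA.spectral_theorem]
  simpa only [Function.comp_def, map_pow] using (hcont.tendsto _).comp hdiag

namespace SimpleGraph

variable {V : Type*} (G : SimpleGraph V)

theorem Reachable.eq_of_forall_adj_eq {β : Type*} {f : V → β} (hf : ∀ u w, G.Adj u w → f u = f w)
    {u w : V} (h : G.Reachable u w) : f u = f w := by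
  obtain ⟨p⟩ := h
  induction p with
  | nil => rfl
  | cons ha _ ih => exact (hf _ _ ha).trans ih

theorem colorable_two_induce_supp_of_adj_eq_neg {y : V → ℝ} {v : V} (hv : y v ≠ 0)
    (hy : ∀ u w, G.Adj u w → y w = -y u) :
    (G.induce (G.connectedComponentMk v).supp).Colorable 2 := by
  have hne (w : V) (hw : w ∈ (G.connectedComponentMk v).supp) : y w ≠ 0 := by
    have hwv : |y w| = |y v| := Reachable.eq_of_forall_adj_eq G (f := fun w => |y w|)
      (fun a b hab => by rw [hy a b hab, abs_neg]) (ConnectedComponent.exact hw)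
    exact abs_ne_zero.1 (hwv ▸ abs_ne_zero.2 hv)
  rw [← Fintype.card_bool]
  refine (Coloring.mk (fun w : (G.connectedComponentMk v).supp => decide (0 < y w)) ?_).colorable
  rintro ⟨a, ha⟩ ⟨b, _⟩ (hab : G.Adj a b)
  rcases (hne a ha).lt_or_gt with h | h <;>
    simp [hy a b hab, h, h.le]

variable [Fintype V] [DecidableRel G.Adj]

theorem sum_sum_neighborFinset_comm {M : Type*} [AddCommMonoid M] (f : V → V → M) :
    ∑ v, ∑ u ∈ G.neighborFinset v, f v u = ∑ v, ∑ u ∈ G.neighborFinset v, f u v :=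
  Finset.sum_comm' (by simp [adj_comm])

theorem sum_sum_neighborFinset_add_mul_sq [DecidableEq V] (y : V → ℝ) (s : ℝ) :
    ∑ v, ∑ u ∈ G.neighborFinset v, (y v + s * y u) ^ 2 =
      (1 + s ^ 2) * ∑ v, G.degree v * y v ^ 2 + 2 * s * (y ⬝ᵥ G.adjMatrix ℝ *ᵥ y) := by
  have hswap : ∑ v, ∑ u ∈ G.neighborFinset v, y u ^ 2 = ∑ v, G.degree v * y v ^ 2 := by
    rw [G.sum_sum_neighborFinset_comm fun _ u => y u ^ 2]
    simp [card_neighborFinset_eq_degree]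
  have hrow (v : V) : ∑ u ∈ G.neighborFinset v, (y v + s * y u) ^ 2 =
      G.degree v * y v ^ 2 + s ^ 2 * ∑ u ∈ G.neighborFinset v, y u ^ 2 +
        2 * s * (y v * ∑ u ∈ G.neighborFinset v, y u) := by
    simp only [add_sq, mul_pow, sum_add_distrib, sum_const, card_neighborFinset_eq_degree,
      nsmul_eq_mul, mul_sum]
    ring_nf
  simp only [hrow, sum_add_distrib, ← mul_sum, hswap, dotProduct, adjMatrix_mulVec_apply]
  ring

theorem sum_degree_mul_rpow_neg_half_mul_sq (hdeg : ∀ v, 0 < G.degree v) (x : V → ℝ) :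
    ∑ v, G.degree v * ((G.degree v : ℝ) ^ (-(1/2 : ℝ)) * x v) ^ 2 = x ⬝ᵥ x := by
  refine Finset.sum_congr rfl fun v _ => ?_
  have hd : (0 : ℝ) < G.degree v := Nat.cast_pos.2 (hdeg v)
  rw [mul_pow, ← Real.rpow_mul_natCast hd.le, ← mul_assoc]
  norm_num [Real.rpow_neg_one, hd.ne', sq]

end SimpleGraph

section normAdj

variable {V : Type} [Fintype V] [DecidableEq V] (G : SimpleGraph V) [DecidableRel G.Adj]

theorem normAdj_isHermitian : (normAdj G).IsHermitian := by
  simp only [IsHermitian, normAdj, conjTranspose_eq_transpose_of_trivial, transpose_mul,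
    diagonal_transpose, G.transpose_adjMatrix, Matrix.mul_assoc]

theorem dotProduct_normAdj_mulVec (x : V → ℝ) :
    x ⬝ᵥ (normAdj G *ᵥ x) =
      (fun v => (G.degree v : ℝ) ^ (-(1/2 : ℝ)) * x v) ⬝ᵥ
        (G.adjMatrix ℝ *ᵥ fun v => (G.degree v : ℝ) ^ (-(1/2 : ℝ)) * x v) := by
  have hright : (diagonal fun v => (G.degree v : ℝ) ^ (-(1/2 : ℝ))) *ᵥ x =
      fun v => (G.degree v : ℝ) ^ (-(1/2 : ℝ)) * x v := funext (mulVec_diagonal _ _)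
  have hleft : x ᵥ* (diagonal fun v => (G.degree v : ℝ) ^ (-(1/2 : ℝ))) =
      fun v => (G.degree v : ℝ) ^ (-(1/2 : ℝ)) * x v :=
    funext fun v => (vecMul_diagonal _ _ v).trans (mul_comm _ _)
  rw [normAdj, ← mulVec_mulVec, ← mulVec_mulVec, dotProduct_mulVec, hleft, hright]

theorem normAdj_eigenvalue_mem_Ioc (hdeg : ∀ v, 0 < G.degree v) (hbip : NoBipartiteComponent G)
    {μ : ℝ} {x : V → ℝ} (hx : x ≠ 0) (hμ : normAdj G *ᵥ x = μ • x) : μ ∈ Set.Ioc (-1) 1 := by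
  set y : V → ℝ := fun v => (G.degree v : ℝ) ^ (-(1/2 : ℝ)) * x v with hy
  have hxx : 0 < x ⬝ᵥ x :=
    (dotProduct_self_star_nonneg x).lt_of_ne' (by simpa using dotProduct_self_eq_zero.not.2 hx)
  have hform (s : ℝ) : ∑ v, ∑ u ∈ G.neighborFinset v, (y v + s * y u) ^ 2 =
      (1 + s ^ 2 + 2 * s * μ) * (x ⬝ᵥ x) := by
    rw [G.sum_sum_neighborFinset_add_mul_sq, hy, G.sum_degree_mul_rpow_neg_half_mul_sq hdeg,
      ← dotProduct_normAdj_mulVec, hμ, dotProduct_smul, smul_eq_mul]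
    ring
  have hnonneg (s : ℝ) : 0 ≤ (1 + s ^ 2 + 2 * s * μ) * (x ⬝ᵥ x) :=
    hform s ▸ sum_nonneg fun _ _ => sum_nonneg fun _ _ => sq_nonneg _
  refine ⟨(show -1 ≤ μ by nlinarith [hnonneg 1]).lt_of_ne fun hμ1 => ?_,
    by nlinarith [hnonneg (-1)]⟩
  have hy_adj (u w : V) (huw : G.Adj u w) : y w = -y u := by
    have hzero : ∑ v, ∑ u ∈ G.neighborFinset v, (y v + 1 * y u) ^ 2 = 0 := by
      rw [hform, ← hμ1]; ring
    rw [sum_eq_zero_iff_of_nonneg fun _ _ => sum_nonneg fun _ _ => sq_nonneg _] at hzero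
    have := (sum_eq_zero_iff_of_nonneg fun _ _ => sq_nonneg _).1 (hzero u (mem_univ u)) w
      ((G.mem_neighborFinset u w).2 huw)
    linarith [pow_eq_zero_iff two_ne_zero |>.1 this]
  obtain ⟨v, hv⟩ := Function.ne_iff.1 hx
  have hyv : y v ≠ 0 :=
    mul_ne_zero (Real.rpow_pos_of_pos (Nat.cast_pos.2 (hdeg v)) _).ne' hv
  exact hbip _ (G.colorable_two_induce_supp_of_adj_eq_neg hyv hy_adj)

end normAdj

theorem stmt1 {V : Type} [Fintype V] [DecidableEq V]
    (G : SimpleGraph V) [DecidableRel G.Adj]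
    (hdeg : ∀ v, 0 < G.degree v) (hbip : NoBipartiteComponent G)
    (d : ℕ) (X : Matrix V (Fin d) ℝ) :
    ∃ Y : Matrix V (Fin d) ℝ,
      (∀ v i, Tendsto (fun k => ((normAdj G ^ k * X : Matrix V (Fin d) ℝ)) v i) atTop (nhds (Y v i))) ∧
      normAdj G * Y = Y := by
  obtain ⟨P, hP⟩ := (normAdj_isHermitian G).exists_tendsto_pow
    fun _ _ hx hμ => normAdj_eigenvalue_mem_Ioc G hdeg hbip hx hμ
  have hPX : Tendsto (fun k => normAdj G ^ k * X) atTop (𝓝 (P * X)) :=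
    ((continuous_id.matrix_mul continuous_const).tendsto P).comp hP
  exact ⟨P * X, fun v i => tendsto_pi_nhds.1 (tendsto_pi_nhds.1 hPX v) i,
    by rw [← Matrix.mul_assoc, mul_eq_of_tendsto_pow hP]⟩
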